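/- Let g(c) = ‖u_c‖² denote the squared norm of a negative ground state at constraint level ∫φ_u u² = c > 0, i.e., g(c) = inf{2I(u) : ∫φ_u u² = c} where I(u) = ½‖u‖² + ∫F(u) and F(u) = 0 for u ≤ 0 (restricting to negative minimizers, I(u) = ½‖u‖²). Then the map c ↦ g(c)/c^{1/2} is nondecreasing on (0,∞); in particular lim_{c→0⁺} g(c) = 0. -/
import Mathlib


open Filter

/-- Let `Q` be the quartic constraint functional (`Q(tu) = t⁴ Q(u)`) and for
`c > 0` let `g(c)` be the infimum of `‖u‖²` over the constraint `Q(u) = c`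
(i.e. of `2I(u)` for negative functions, where `I(u) = ½‖u‖²`). If each `g(c)`
is positive, then `c ↦ g(c)/√c` is nondecreasing on `(0,∞)`; in particular
`g(c) → 0` as `c → 0⁺`. -/
theorem stmt_16 {W : Type*} [NormedAddCommGroup W] [InnerProductSpace ℝ W]
    (Q : W → ℝ) (hQ : ∀ (t : ℝ) (u : W), Q (t • u) = t ^ 4 * Q u)
    (g : ℝ → ℝ)
    (hg : ∀ c > (0 : ℝ), IsGLB {r : ℝ | ∃ u : W, Q u = c ∧ r = ‖u‖ ^ 2} (g c))
    (hgpos : ∀ c > (0 : ℝ), 0 < g c) :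
    (∀ c₁ c₂ : ℝ, 0 < c₁ → c₁ < c₂ →
      g c₁ / Real.sqrt c₁ ≤ g c₂ / Real.sqrt c₂) ∧
    Tendsto g (nhdsWithin 0 (Set.Ioi 0)) (nhds 0) := by
  have mono : ∀ c₁ c₂ : ℝ, 0 < c₁ → c₁ < c₂ →
      g c₁ / Real.sqrt c₁ ≤ g c₂ / Real.sqrt c₂ := by
    intro c₁ c₂ hc₁ hlt
    have hc₂ : 0 < c₂ := hc₁.trans hlt
    have hs₁ : 0 < Real.sqrt c₁ := Real.sqrt_pos.2 hc₁
    have hs₂ : 0 < Real.sqrt c₂ := Real.sqrt_pos.2 hc₂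
    set s : ℝ := Real.sqrt c₁ / Real.sqrt c₂ with hsdef
    have hs : 0 < s := div_pos hs₁ hs₂
    have hdivpos : 0 < c₁ / c₂ := div_pos hc₁ hc₂
    have key : g c₁ / s ≤ g c₂ := by
      apply (hg c₂ hc₂).2
      rintro r ⟨u, hu, rfl⟩
      set t : ℝ := (c₁ / c₂) ^ ((1 : ℝ) / 4) with htdef
      have ht : 0 < t := Real.rpow_pos_of_pos hdivpos _
      have ht4 : t ^ 4 = c₁ / c₂ := by
        rw [htdef, ← Real.rpow_natCast ((c₁ / c₂) ^ ((1:ℝ)/4)) 4,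
          ← Real.rpow_mul hdivpos.le]
        norm_num
      have ht2 : t ^ 2 = s := by
        rw [htdef, ← Real.rpow_natCast ((c₁ / c₂) ^ ((1:ℝ)/4)) 2,
          ← Real.rpow_mul hdivpos.le, hsdef]
        rw [show (1:ℝ)/4 * (2:ℕ) = 1/2 by norm_num,
          Real.rpow_div_two_eq_sqrt 1 hdivpos.le]
        simp [Real.sqrt_div' , Real.sqrt_div hc₁.le]
      have hmem : s * ‖u‖ ^ 2 ∈ {r : ℝ | ∃ u : W, Q u = c₁ ∧ r = ‖u‖ ^ 2} := by
        refine ⟨t • u, ?_, ?_⟩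
        · rw [hQ, ht4, hu]
          field_simp
        · rw [norm_smul, mul_pow, Real.norm_eq_abs, sq_abs, ht2]
      have hle := (hg c₁ hc₁).1 hmem
      rw [div_le_iff₀ hs] at *
      nlinarith
    rw [div_le_div_iff₀ hs₁ hs₂]
    rw [div_le_iff₀ hs] at key
    rw [hsdef] at key
    have := mul_le_mul_of_nonneg_right key hs₂.le
    calc g c₁ * Real.sqrt c₂ ≤ g c₂ * (Real.sqrt c₁ / Real.sqrt c₂) * Real.sqrt c₂ := this
      _ = g c₂ * Real.sqrt c₁ := by field_simp
  refine ⟨mono, ?_⟩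
  have hIoo : ∀ᶠ c in nhdsWithin (0:ℝ) (Set.Ioi 0), c ∈ Set.Ioo (0:ℝ) 1 :=
    Ioo_mem_nhdsGT_of_mem ⟨le_refl 0, one_pos⟩
  have hbound : Tendsto (fun c : ℝ => Real.sqrt c * g 1) (nhdsWithin 0 (Set.Ioi 0)) (nhds 0) := by
    have h : Tendsto (fun c : ℝ => Real.sqrt c) (nhdsWithin 0 (Set.Ioi 0)) (nhds 0) := by
      have := (Real.continuous_sqrt.tendsto 0).mono_left (nhdsWithin_le_nhds (s := Set.Ioi 0))
      simpa using this
    simpa using h.mul_const (g 1)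
  refine squeeze_zero' ?_ ?_ hbound
  · filter_upwards [hIoo] with c hc
    exact (hgpos c hc.1).le
  · filter_upwards [hIoo] with c hc
    have h := mono c 1 hc.1 hc.2
    have hs : 0 < Real.sqrt c := Real.sqrt_pos.2 hc.1
    rw [Real.sqrt_one, div_one, div_le_iff₀ hs] at h
    linarith [h]
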